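/- Suppose m ∈ ℤ + 1/2 is a half-odd integer and θ_{ℓm} varies as ±πm. Then the phase condition arg ψ_{μℓm} + arg ψ_{μℓ,−m} ≡ θ_{ℓm} (mod 2π) is inconsistent with its counterpart at −m: θ_{ℓm} and θ_{ℓ,−m} differ by π (mod 2π), while the left-hand side is symmetric in m ↔ −m; hence no state can satisfy both, i.e. θ̂ has no eigenvectors in a spinor representation. -/

import Mathlib

/-!
For half-odd `m` the phase `u = exp (-i s π m)` satisfies `u² = -1`, while the phase at `-m` is
`conj u`. Conjugating the eigenvalue equation at `-m` and substituting the one at `m` gives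
`ψ_m u² = |c|² ψ_m`, i.e. `(1 + |c|²) ψ_m = 0`, so `ψ_m = 0` for every half-odd `m`; on the
remaining `m` the state vanishes by assumption.
-/

open Complex ComplexConjugate

theorem eq_zero_of_conj_mul_eq_of_sq_eq_neg_one {a b c u : ℂ} (hu : u ^ 2 = -1)
    (h₁ : conj b * u = c * a) (h₂ : conj a * conj u = c * b) : a = 0 := by
  have h₂' : a * u = conj c * conj b := by simpa using congrArg conj h₂
  have hnorm : a * (1 + (normSq c : ℂ)) = 0 := by
    rw [normSq_eq_conj_mul_self]
    linear_combination a * hu - u * h₂' - conj c * h₁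
  have hpos : (1 + (normSq c : ℂ)) ≠ 0 := by
    exact_mod_cast (add_pos_of_pos_of_nonneg one_pos (normSq_nonneg c)).ne'
  exact (mul_eq_zero.mp hnorm).resolve_right hpos

theorem exp_sq_eq_neg_one_of_two_mul_eq_odd_mul {z : ℂ} {n : ℤ} (hn : Odd n)
    (hz : 2 * z = n * (Real.pi * I)) : exp z ^ 2 = -1 := by
  rw [← exp_nat_mul, Nat.cast_ofNat, hz, exp_int_mul, exp_pi_mul_I, hn.neg_one_zpow]

theorem exists_odd_two_mul_phase_eq {s m : ℝ} (hs : s = 1 ∨ s = -1)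
    (hm : ∃ k : ℤ, m = k + 1 / 2) :
    ∃ n : ℤ, Odd n ∧ 2 * (I * s * Real.pi * -(m : ℂ)) = n * (Real.pi * I) := by
  obtain ⟨k, rfl⟩ := hm
  rcases hs with rfl | rfl
  · exact ⟨-(2 * k + 1), by simp [parity_simps], by push_cast; ring⟩
  · exact ⟨2 * k + 1, odd_two_mul_add_one k, by push_cast; ring⟩

theorem spinor_no_eigenvectors
    (s : ℝ) (hs : s = 1 ∨ s = -1)
    (ψ : ℕ × ℕ × ℝ → ℂ)
    (hsupp : ∀ (μ ℓ : ℕ) (m : ℝ), (¬ ∃ k : ℤ, m = (k : ℝ) + 1 / 2) → ψ (μ, ℓ, m) = 0)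
    (hψ : ψ ≠ 0) :
    ¬ ∃ c : ℂ,
      (fun b : ℕ × ℕ × ℝ =>
          (starRingEnd ℂ) (ψ (b.1, b.2.1, -b.2.2)) *
            Complex.exp (Complex.I * (s : ℂ) * (Real.pi : ℂ) * (-(b.2.2) : ℂ)))
        = fun b => c * ψ b := by
  rintro ⟨c, hc⟩
  apply hψ
  funext ⟨μ, ℓ, m⟩
  by_cases hm : ∃ k : ℤ, m = (k : ℝ) + 1 / 2
  · obtain ⟨n, hn, hphase⟩ := exists_odd_two_mul_phase_eq hs hm
    refine eq_zero_of_conj_mul_eq_of_sq_eq_neg_one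
      (exp_sq_eq_neg_one_of_two_mul_eq_odd_mul hn hphase) (congrFun hc (μ, ℓ, m)) ?_
    rw [← exp_conj]
    simpa using congrFun hc (μ, ℓ, -m)
  · exact hsupp μ ℓ m hm
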